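/- Let σ > 0 and c > 0, and let k_1, ..., k_T be real numbers with 0 ≤ k_t ≤ c for all t. Define ρ = (1/2) Σ_{t=1}^T log(1 + σ^{−2} k_t). Then min_{t∈[T]} k_t ≤ 2cρ / (T·log(1 + c·σ^{−2})). -/

import Mathlib

open Finset

/- The minimum is at most the average, so `T log (1 + s k_min) ≤ 2ρ` with `s = σ⁻²`. On `[0, c]`
the concave function `x ↦ log (1 + s x)` lies above its chord: Bernoulli's inequality gives
`(1 + s c) ^ (x / c) ≤ 1 + s x`, i.e. `x log (1 + s c) ≤ c log (1 + s x)`. -/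

lemma mul_log_one_add_mul_le_of_le {s c x : ℝ} (hs : 0 ≤ s) (hx₀ : 0 ≤ x) (hxc : x ≤ c) :
    x * Real.log (1 + s * c) ≤ c * Real.log (1 + s * x) := by
  rcases (hx₀.trans hxc).eq_or_lt with rfl | hc
  · simp [le_antisymm hxc hx₀]
  have hsc : 0 < 1 + s * c := by positivity
  have hbern : (1 + s * c) ^ (x / c) ≤ 1 + s * x := by
    have h := rpow_one_add_le_one_add_mul_self (by nlinarith : (-1 : ℝ) ≤ s * c)
      (div_nonneg hx₀ hc.le) ((div_le_one hc).2 hxc)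
    convert h using 2
    field_simp
  have hlog := Real.log_le_log (Real.rpow_pos_of_pos hsc _) hbern
  rw [Real.log_rpow hsc, div_mul_eq_mul_div, div_le_iff₀ hc] at hlog
  linarith

theorem stmt9 (T : ℕ) (hT : 1 ≤ T) (σ c : ℝ) (hσ : 0 < σ) (hc : 0 < c)
    (k : Fin T → ℝ) (hk : ∀ t, 0 ≤ k t ∧ k t ≤ c)
    (ρ : ℝ) (hρ : ρ = (1 / 2) * ∑ t : Fin T, Real.log (1 + σ⁻¹ ^ 2 * k t)) :
    ∃ τ : Fin T, (∀ t, k τ ≤ k t) ∧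
      k τ ≤ 2 * c * ρ / (T * Real.log (1 + c * σ⁻¹ ^ 2)) := by
  have : NeZero T := ⟨by omega⟩
  obtain ⟨τ, -, hτ⟩ := exists_min_image univ k univ_nonempty
  refine ⟨τ, fun t => hτ t (mem_univ t), ?_⟩
  set s := σ⁻¹ ^ 2
  have hs : 0 < s := by positivity
  have havg : T * Real.log (1 + s * k τ) ≤ 2 * ρ := by
    have := card_nsmul_le_sum univ (fun t => Real.log (1 + s * k t)) (Real.log (1 + s * k τ))
      fun t _ => Real.log_le_log (by nlinarith [(hk τ).1]) (by gcongr; exact hτ t (mem_univ t))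
    simpa [hρ] using this
  have hlogc : 0 < Real.log (1 + c * s) := Real.log_pos (by nlinarith)
  rw [le_div_iff₀ (by positivity), mul_comm c s]
  calc k τ * (T * Real.log (1 + s * c))
      = T * (k τ * Real.log (1 + s * c)) := by ring
    _ ≤ T * (c * Real.log (1 + s * k τ)) :=
        mul_le_mul_of_nonneg_left (mul_log_one_add_mul_le_of_le hs.le (hk τ).1 (hk τ).2)
          (Nat.cast_nonneg T)
    _ = c * (T * Real.log (1 + s * k τ)) := by ring
    _ ≤ 2 * c * ρ := by linarith [mul_le_mul_of_nonneg_left havg hc.le]
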